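/- For all positive integers i, j, k, l, there exists a bipartite tournament with partite sets of sizes i+j and k+l whose niche graph is the disjoint union (K_i ∪ K_j) ∪ (K_k ∪ K_l). -/

import Mathlib

/-!
Split each side into two blocks, `U = U₁ ∪ U₂` and `V = V₁ ∪ V₂`, and orient the arcs along the
block cycle `U₁ → V₁ → U₂ → V₂ → U₁`. Each vertex of one side is an out-neighbour of one block of
the other side and an in-neighbour of the other block, so it is a common out- or in-neighbour of
any two vertices in the same block. Vertices of different blocks of the same side have disjoint
out- and in-neighbourhoods, and vertices of different sides never share a neighbour.
-/

structure BipTournament (α : Type*) where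
  U : Set α
  V : Set α
  A : α → α → Prop
  disj : Disjoint U V
  cover : U ∪ V = Set.univ
  orient : ∀ u ∈ U, ∀ v ∈ V, Xor' (A u v) (A v u)
  arcs : ∀ x y, A x y → (x ∈ U ∧ y ∈ V) ∨ (x ∈ V ∧ y ∈ U)

def BipTournament.outN {α : Type*} (D : BipTournament α) (x : α) : Set α := {y | D.A x y}

def BipTournament.inN {α : Type*} (D : BipTournament α) (x : α) : Set α := {y | D.A y x}

def BipTournament.niche {α : Type*} (D : BipTournament α) : SimpleGraph α where
  Adj x y := x ≠ y ∧ ((∃ w, D.A x w ∧ D.A y w) ∨ (∃ w, D.A w x ∧ D.A w y))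
  symm := ⟨by
    rintro x y ⟨h, h'⟩
    exact ⟨h.symm, h'.imp (fun ⟨w, a, b⟩ => ⟨w, b, a⟩) (fun ⟨w, a, b⟩ => ⟨w, b, a⟩)⟩⟩
  loopless := ⟨fun x h => h.1 rfl⟩

namespace BipTournament

variable {α β : Type*} (p : α → Prop) (q : β → Prop)

/-- With blocks `U₁ = {p}`, `U₂ = {¬p}`, `V₁ = {q}`, `V₂ = {¬q}`, the arcs run
`U₁ → V₁ → U₂ → V₂ → U₁`. -/
inductive BlockCycleArc : α ⊕ β → α ⊕ β → Prop
  | forward {a b} : (p a ↔ q b) → BlockCycleArc (.inl a) (.inr b)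
  | backward {a b} : ¬(p a ↔ q b) → BlockCycleArc (.inr b) (.inl a)

variable {p q}

@[simp] theorem blockCycleArc_inl_inr {a : α} {b : β} :
    BlockCycleArc p q (.inl a) (.inr b) ↔ (p a ↔ q b) :=
  ⟨by rintro ⟨⟩; assumption, .forward⟩

@[simp] theorem blockCycleArc_inr_inl {a : α} {b : β} :
    BlockCycleArc p q (.inr b) (.inl a) ↔ ¬(p a ↔ q b) :=
  ⟨by rintro ⟨⟩; assumption, .backward⟩

@[simp] theorem not_blockCycleArc_inl_inl {a a' : α} : ¬BlockCycleArc p q (.inl a) (.inl a') := by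
  rintro ⟨⟩

@[simp] theorem not_blockCycleArc_inr_inr {b b' : β} : ¬BlockCycleArc p q (.inr b) (.inr b') := by
  rintro ⟨⟩

variable (p q) in
def blockCycle : BipTournament (α ⊕ β) where
  U := Set.range Sum.inl
  V := Set.range Sum.inr
  A := BlockCycleArc p q
  disj := Set.disjoint_left.2 (by rintro _ ⟨a, rfl⟩ ⟨b, ⟨⟩⟩)
  cover := Set.range_inl_union_range_inr
  orient := by
    rintro _ ⟨a, rfl⟩ _ ⟨b, rfl⟩
    rw [blockCycleArc_inl_inr, blockCycleArc_inr_inl]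
    exact xor_not_right.2 Iff.rfl
  arcs := by
    rintro _ _ (@⟨a, b, -⟩ | @⟨a, b, -⟩)
    · exact .inl ⟨⟨a, rfl⟩, ⟨b, rfl⟩⟩
    · exact .inr ⟨⟨b, rfl⟩, ⟨a, rfl⟩⟩

theorem blockCycle_niche_adj_inl_inl [Nonempty β] {a a' : α} :
    (blockCycle p q).niche.Adj (.inl a) (.inl a') ↔ a ≠ a' ∧ (p a ↔ p a') := by
  simp only [niche, blockCycle, ne_eq, Sum.inl.injEq, Sum.exists, blockCycleArc_inl_inr,
    blockCycleArc_inr_inl, not_blockCycleArc_inl_inl, false_and, exists_false, false_or]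
  refine and_congr_right fun _ => ⟨?_, fun h => ?_⟩
  · rintro (⟨b, hab, ha'b⟩ | ⟨b, hab, ha'b⟩) <;> tauto
  · obtain ⟨b⟩ := ‹Nonempty β›
    by_cases hb : p a ↔ q b
    · exact .inl ⟨b, hb, h.symm.trans hb⟩
    · exact .inr ⟨b, hb, fun h' => hb (h.trans h')⟩

theorem blockCycle_niche_adj_inr_inr [Nonempty α] {b b' : β} :
    (blockCycle p q).niche.Adj (.inr b) (.inr b') ↔ b ≠ b' ∧ (q b ↔ q b') := by
  simp only [niche, blockCycle, ne_eq, Sum.inr.injEq, Sum.exists, blockCycleArc_inl_inr,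
    blockCycleArc_inr_inl, not_blockCycleArc_inr_inr, and_false, exists_false, or_false]
  refine and_congr_right fun _ => ⟨?_, fun h => ?_⟩
  · rintro (⟨a, hab, hab'⟩ | ⟨a, hab, hab'⟩) <;> tauto
  · obtain ⟨a⟩ := ‹Nonempty α›
    by_cases ha : p a ↔ q b
    · exact .inr ⟨a, ha, ha.trans h⟩
    · exact .inl ⟨a, ha, fun h' => ha (h'.trans h.symm)⟩

theorem blockCycle_niche_not_adj_inl_inr {a : α} {b : β} :
    ¬(blockCycle p q).niche.Adj (.inl a) (.inr b) := by
  rintro ⟨-, ⟨(_ | _), h, h'⟩ | ⟨(_ | _), h, h'⟩⟩ <;> simp_all [blockCycle]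

theorem blockCycle_niche_adj [Nonempty α] [Nonempty β] {x y : α ⊕ β} :
    (blockCycle p q).niche.Adj x y ↔
      x ≠ y ∧ Sum.LiftRel (fun a a' => (p a ↔ p a')) (fun b b' => (q b ↔ q b')) x y := by
  rcases x with a | b <;> rcases y with a' | b'
  · simp [blockCycle_niche_adj_inl_inl]
  · simpa using blockCycle_niche_not_adj_inl_inr
  · simpa using fun h => blockCycle_niche_not_adj_inl_inr h.symm
  · simp [blockCycle_niche_adj_inr_inr]

end BipTournament

theorem stmt13 (i j k l : ℕ) (hi : 0 < i) (hk : 0 < k) :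
    ∃ D : BipTournament (Fin (i + j) ⊕ Fin (k + l)),
      D.U = Set.range Sum.inl ∧ D.V = Set.range Sum.inr ∧
      D.niche = SimpleGraph.fromRel (fun x y =>
        match x, y with
        | Sum.inl a, Sum.inl b => (a.val < i ∧ b.val < i) ∨ (i ≤ a.val ∧ i ≤ b.val)
        | Sum.inr a, Sum.inr b => (a.val < k ∧ b.val < k) ∨ (k ≤ a.val ∧ k ≤ b.val)
        | _, _ => False) := by
  have : Nonempty (Fin (i + j)) := ⟨⟨0, by omega⟩⟩
  have : Nonempty (Fin (k + l)) := ⟨⟨0, by omega⟩⟩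
  refine ⟨.blockCycle (fun a => a.val < i) (fun b => b.val < k), rfl, rfl, ?_⟩
  ext x y
  rw [BipTournament.blockCycle_niche_adj, SimpleGraph.fromRel_adj]
  refine and_congr_right fun _ => ?_
  rcases x with a | b <;> rcases y with a' | b' <;>
    simp only [Sum.liftRel_inl_inl, Sum.liftRel_inr_inr, Sum.not_liftRel_inl_inr,
      Sum.not_liftRel_inr_inl, or_self] <;> omega
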